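/- The decision boundary is characterized by equality of the support functions of the two zonotopes: for every x ∈ ℝⁿ, f₁(x) − f₂(x) = sup_{z ∈ Z₁} ⟨z, x⟩ − sup_{z ∈ Z₂} ⟨z, x⟩; consequently, {x ∈ ℝⁿ : f₁(x) = f₂(x)} = {x ∈ ℝⁿ : sup_{z ∈ Z₁} ⟨z, x⟩ = sup_{z ∈ Z₂} ⟨z, x⟩}. -/

import Mathlib

open Matrix Finset Pointwise

/-- Entrywise positive part of a matrix. -/
noncomputable def matPos {p n : ℕ} (M : Matrix (Fin p) (Fin n) ℝ) : Matrix (Fin p) (Fin n) ℝ :=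
  fun i j => max (M i j) 0

/-- Entrywise negative part of a matrix. -/
noncomputable def matNeg {p n : ℕ} (M : Matrix (Fin p) (Fin n) ℝ) : Matrix (Fin p) (Fin n) ℝ :=
  fun i j => max (-(M i j)) 0

/-- Output `i` of the bias-free network `f(x) = B max(Ax, 0)`. -/
noncomputable def netOut {p n k : ℕ} (A : Matrix (Fin p) (Fin n) ℝ)
    (B : Matrix (Fin k) (Fin p) ℝ) (i : Fin k) (x : Fin n → ℝ) : ℝ :=
  ∑ j, B i j * max (A j ⬝ᵥ x) 0

/-- The zonotope `Z_{ij}`: Minkowski sum of the line segments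
`[(B⁺(i,m)+B⁻(j,m))·A⁺(m,:), (B⁺(i,m)+B⁻(j,m))·A⁻(m,:)]` shifted by
`(A⁻)ᵀ (B⁻(i,:)+B⁺(j,:))ᵀ`. -/
noncomputable def zono {p n k : ℕ} (A : Matrix (Fin p) (Fin n) ℝ)
    (B : Matrix (Fin k) (Fin p) ℝ) (i j : Fin k) : Set (Fin n → ℝ) :=
  (∑ m : Fin p,
      segment ℝ ((matPos B i m + matNeg B j m) • matPos A m)
        ((matPos B i m + matNeg B j m) • matNeg A m))
    + ({fun t => ∑ m, matNeg A m t * (matNeg B i m + matPos B j m)} : Set (Fin n → ℝ))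

/-! The support function of a zonotope `∑ₘ [uₘ, vₘ] + {c}` in direction `x` is
`∑ₘ max ⟪uₘ, x⟫ ⟪vₘ, x⟫ + ⟪c, x⟫`. For `Z_{ij}`, writing `A(m,:) = A⁺(m,:) − A⁻(m,:)`, it becomes
`∑ₘ (B⁺(i,m) + B⁻(j,m)) max(⟪A(m,:), x⟫, 0) + (|B(i,m)| + |B(j,m)|) ⟪A⁻(m,:), x⟫`. The second
summand is symmetric in `i, j`, so it cancels in `h_{Z_{ij}} − h_{Z_{ji}}`, and what remains is
`∑ₘ (B(i,m) − B(j,m)) max(⟪A(m,:), x⟫, 0) = fᵢ(x) − fⱼ(x)`. -/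

section SupportFunction

variable {ι M : Type*} [AddCommMonoid M] [Preorder M] [AddLeftMono M] [AddRightMono M]

theorem IsGreatest.add {s t : Set M} {a b : M} (hs : IsGreatest s a) (ht : IsGreatest t b) :
    IsGreatest (s + t) (a + b) :=
  ⟨Set.add_mem_add hs.1 ht.1, add_mem_upperBounds_add hs.2 ht.2⟩

theorem isGreatest_finsetSum (t : Finset ι) {s : ι → Set M} {b : ι → M}
    (h : ∀ i ∈ t, IsGreatest (s i) (b i)) : IsGreatest (∑ i ∈ t, s i) (∑ i ∈ t, b i) := by
  classical
  induction t using Finset.induction_on with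
  | empty => exact isGreatest_singleton
  | insert i t hi ih =>
    rw [Finset.sum_insert hi, Finset.sum_insert hi]
    exact (h i (Finset.mem_insert_self i t)).add
      (ih fun j hj => h j (Finset.mem_insert_of_mem hj))

variable {E : Type*} [AddCommGroup E] [Module ℝ E] (φ : E →ₗ[ℝ] ℝ)

theorem isGreatest_image_segment (u v : E) :
    IsGreatest (φ '' segment ℝ u v) (max (φ u) (φ v)) := by
  rw [← LinearMap.coe_toAffineMap, image_segment, segment_eq_uIcc]
  exact isGreatest_Icc inf_le_sup

theorem isGreatest_image_zonotope [Fintype ι] (u v : ι → E) (c : E) :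
    IsGreatest (φ '' (∑ i, segment ℝ (u i) (v i) + {c})) (∑ i, max (φ (u i)) (φ (v i)) + φ c) := by
  rw [Set.image_add, Set.image_finsetSum, Set.image_singleton]
  exact (isGreatest_finsetSum _ fun i _ => isGreatest_image_segment φ (u i) (v i)).add
    isGreatest_singleton

end SupportFunction

section Network

variable {p n k : ℕ} (A : Matrix (Fin p) (Fin n) ℝ)

theorem matPos_sub_matNeg (i : Fin p) (j : Fin n) : matPos A i j - matNeg A i j = A i j :=
  max_zero_sub_max_neg_zero_eq_self _

theorem matPos_add_matNeg (i : Fin p) (j : Fin n) : matPos A i j + matNeg A i j = |A i j| :=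
  max_zero_add_max_neg_zero_eq_abs_self _

theorem matPos_nonneg (i : Fin p) (j : Fin n) : 0 ≤ matPos A i j := le_max_right _ _

theorem matNeg_nonneg (i : Fin p) (j : Fin n) : 0 ≤ matNeg A i j := le_max_right _ _

theorem max_matPos_dotProduct_matNeg_dotProduct (m : Fin p) (x : Fin n → ℝ) :
    max (matPos A m ⬝ᵥ x) (matNeg A m ⬝ᵥ x) = max (A m ⬝ᵥ x) 0 + matNeg A m ⬝ᵥ x := by
  have hsplit : matPos A m ⬝ᵥ x = A m ⬝ᵥ x + matNeg A m ⬝ᵥ x := by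
    rw [← sub_eq_iff_eq_add, ← sub_dotProduct]
    congr 1
    funext j
    exact matPos_sub_matNeg A m j
  rw [hsplit, ← max_add_add_right, zero_add]

theorem sSup_dotProduct_zono (B : Matrix (Fin k) (Fin p) ℝ) (i j : Fin k) (x : Fin n → ℝ) :
    sSup ((fun z => z ⬝ᵥ x) '' zono A B i j)
      = ∑ m, ((matPos B i m + matNeg B j m) * max (A m ⬝ᵥ x) 0
          + (|B i m| + |B j m|) * (matNeg A m ⬝ᵥ x)) := by
  set c : Fin p → ℝ := fun m => matPos B i m + matNeg B j m
  set d : Fin p → ℝ := fun m => matNeg B i m + matPos B j m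
  have hc : ∀ m, 0 ≤ c m := fun m =>
    add_nonneg (matPos_nonneg B i m) (matNeg_nonneg B j m)
  refine (isGreatest_image_zonotope ((dotProductBilin ℝ ℝ).flip x) (fun m => c m • matPos A m)
    (fun m => c m • matNeg A m) ((matNeg A)ᵀ *ᵥ d)).csSup_eq.trans ?_
  simp only [LinearMap.flip_apply, dotProductBilin_apply_apply, smul_dotProduct, smul_eq_mul,
    ← mul_max_of_nonneg _ _ (hc _), mulVec_transpose, ← dotProduct_mulVec]
  rw [dotProduct, ← Finset.sum_add_distrib]
  refine Finset.sum_congr rfl fun m _ => ?_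
  rw [max_matPos_dotProduct_matNeg_dotProduct, ← matPos_add_matNeg, ← matPos_add_matNeg]
  simp only [c, d, mulVec]
  ring

theorem netOut_sub_netOut (B : Matrix (Fin k) (Fin p) ℝ) (i j : Fin k) (x : Fin n → ℝ) :
    netOut A B i x - netOut A B j x
      = sSup ((fun z => z ⬝ᵥ x) '' zono A B i j) - sSup ((fun z => z ⬝ᵥ x) '' zono A B j i) := by
  rw [sSup_dotProduct_zono, sSup_dotProduct_zono, netOut, netOut, ← Finset.sum_sub_distrib,
    ← Finset.sum_sub_distrib]
  refine Finset.sum_congr rfl fun m _ => ?_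
  linear_combination (max (A m ⬝ᵥ x) 0) * (matPos_sub_matNeg B j m - matPos_sub_matNeg B i m)

end Network

/-- The difference of the two network outputs is the difference of the support functions of
the zonotopes `Z₁`, `Z₂`; consequently the decision boundary `{x : f₁(x) = f₂(x)}` is exactly
the set where the two support functions coincide. -/
theorem decision_boundary_support_functions {p n : ℕ}
    (A : Matrix (Fin p) (Fin n) ℝ) (B : Matrix (Fin 2) (Fin p) ℝ) :
    (∀ x : Fin n → ℝ,
      netOut A B 0 x - netOut A B 1 x
        = sSup ((fun z => z ⬝ᵥ x) '' zono A B 0 1) - sSup ((fun z => z ⬝ᵥ x) '' zono A B 1 0)) ∧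
    {x : Fin n → ℝ | netOut A B 0 x = netOut A B 1 x}
      = {x : Fin n → ℝ |
          sSup ((fun z => z ⬝ᵥ x) '' zono A B 0 1) = sSup ((fun z => z ⬝ᵥ x) '' zono A B 1 0)} := by
  refine ⟨netOut_sub_netOut A B 0 1, Set.ext fun x => ?_⟩
  rw [Set.mem_ofPred_eq, Set.mem_ofPred_eq, ← sub_eq_zero, netOut_sub_netOut, sub_eq_zero]
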